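/- (Ruan axiom R2 for the matrix norms on λ-cb maps.) Let E ⊆ A and F ⊆ B be operator spaces and λ a weight. Let φ : E → M_n(F) be a λ-cb map and let α, β ∈ M_n(ℂ). Then the map αφβ : E → M_n(F), e ↦ α · φ(e) · β (matrix products, with scalar matrices acting on M_n(B)), is λ-cb and ‖αφβ‖_{cb}^λ ≤ ‖α‖ · ‖φ‖_{cb}^λ · ‖β‖, where ‖α‖, ‖β‖ are the C*-norms of α, β in M_n(ℂ). -/

import Mathlib

set_option synthInstance.maxHeartbeats 1000000
set_option maxHeartbeats 1000000

noncomputable section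

namespace WeightedCB

open scoped BigOperators

/-- Applying a matrix of bounded operators on `H` to a vector of `ℓ²(ι, H)`. -/
def opMatApply {H : Type*} [NormedAddCommGroup H] [InnerProductSpace ℂ H]
    {ι : Type*} [Fintype ι] (e : Matrix ι ι (H →L[ℂ] H))
    (v : PiLp 2 fun _ : ι => H) : PiLp 2 fun _ : ι => H :=
  (WithLp.equiv 2 (∀ _ : ι, H)).symm fun i => ∑ j, e i j ((WithLp.equiv 2 (∀ _ : ι, H)) v j)

/-- The C*-norm of a matrix over `B(H)`: the operator norm of the induced operator
on `ℓ²(ι, H)`.  This realizes the norm of the C*-algebra `Mₙ(B(H)) = B(Hⁿ)`. -/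
def opMatNorm {H : Type*} [NormedAddCommGroup H] [InnerProductSpace ℂ H]
    {ι : Type*} [Fintype ι] (e : Matrix ι ι (H →L[ℂ] H)) : ℝ :=
  sInf {C : ℝ | 0 ≤ C ∧ ∀ v : PiLp 2 (fun _ : ι => H), ‖opMatApply e v‖ ≤ C * ‖v‖}

/-- A scalar (possibly rectangular) matrix acting on Euclidean space. -/
def cMatApply {ι κ : Type*} [Fintype ι] [Fintype κ] (a : Matrix ι κ ℂ)
    (v : EuclideanSpace ℂ κ) : EuclideanSpace ℂ ι :=
  (WithLp.equiv 2 (ι → ℂ)).symm (a.mulVec ((WithLp.equiv 2 (κ → ℂ)) v))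

/-- The C*-norm (i.e. the operator norm `ℓ²(κ) → ℓ²(ι)`) of a scalar matrix. -/
def cMatNorm {ι κ : Type*} [Fintype ι] [Fintype κ] (a : Matrix ι κ ℂ) : ℝ :=
  sInf {C : ℝ | 0 ≤ C ∧ ∀ v : EuclideanSpace ℂ κ, ‖cMatApply a v‖ ≤ C * ‖v‖}

/-- A weight: a uniformly bounded sequence of nonzero linear maps `λₙ : Mₙ(ℂ) → Mₙ(ℂ)`,
indexed so that `map n` acts on `(n+1) × (n+1)` matrices (sizes `n + 1 ≥ 1`). -/
structure Weight where
  map : ∀ n : ℕ, Matrix (Fin (n + 1)) (Fin (n + 1)) ℂ →ₗ[ℂ] Matrix (Fin (n + 1)) (Fin (n + 1)) ℂ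
  nonzero : ∀ n, map n ≠ 0
  bounded : ∃ C : ℝ, 0 ≤ C ∧ ∀ n a, cMatNorm (map n a) ≤ C * cMatNorm a

/-- `sup_n ‖λₙ‖`, expressed as the least uniform bound for the weight. -/
def weightBound (lam : Weight) : ℝ :=
  sInf {C : ℝ | 0 ≤ C ∧ ∀ n a, cMatNorm (lam.map n a) ≤ C * cMatNorm a}

/-- The weighted amplification `φ ⊗ λₙ` of a map `φ`, applied to a matrix `e`:
its `(k, l)` entry is `∑ i j, (λₙ(ε i j)) k l • φ (e i j)`. -/
def wAmp {E W : Type*} [AddCommMonoid W] [Module ℂ W] (lam : Weight) (φ : E → W) {n : ℕ}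
    (e : Matrix (Fin (n + 1)) (Fin (n + 1)) E) : Matrix (Fin (n + 1)) (Fin (n + 1)) W :=
  Matrix.of fun k l => ∑ i, ∑ j, (lam.map n (Matrix.single i j 1)) k l • φ (e i j)

/-- The canonical identification `M_ι(M_κ(W)) = M_{ι × κ}(W)`. -/
def flatten {ι κ W : Type*} (X : Matrix ι ι (Matrix κ κ W)) : Matrix (ι × κ) (ι × κ) W :=
  Matrix.of fun p q => X p.1 q.1 p.2 q.2

section OperatorSpaces

variable {H₁ H₂ H₃ : Type*}
  [NormedAddCommGroup H₁] [InnerProductSpace ℂ H₁]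
  [NormedAddCommGroup H₂] [InnerProductSpace ℂ H₂]
  [NormedAddCommGroup H₃] [InnerProductSpace ℂ H₃]

/-- The norm of a matrix with entries in the operator space `E ⊆ B(H₁)`, namely its norm
as an element of the C*-algebra `M_ι(B(H₁))`. -/
def subNorm {E : Submodule ℂ (H₁ →L[ℂ] H₁)} {ι : Type*} [Fintype ι]
    (e : Matrix ι ι ↥E) : ℝ :=
  opMatNorm (e.map ((↑) : ↥E → (H₁ →L[ℂ] H₁)))

/-- `φ : E → B(H₂)` is completely bounded: its amplifications are uniformly bounded. -/
def IsCB {E : Submodule ℂ (H₁ →L[ℂ] H₁)} (φ : ↥E → (H₂ →L[ℂ] H₂)) : Prop :=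
  ∃ C : ℝ, 0 ≤ C ∧ ∀ (n : ℕ) (e : Matrix (Fin (n + 1)) (Fin (n + 1)) ↥E),
    opMatNorm (e.map φ) ≤ C * subNorm e

/-- The completely bounded norm `‖φ‖_cb = sup_n ‖φ⁽ⁿ⁾‖`, as the least uniform bound. -/
def cbNorm {E : Submodule ℂ (H₁ →L[ℂ] H₁)} (φ : ↥E → (H₂ →L[ℂ] H₂)) : ℝ :=
  sInf {C : ℝ | 0 ≤ C ∧ ∀ (n : ℕ) (e : Matrix (Fin (n + 1)) (Fin (n + 1)) ↥E),
    opMatNorm (e.map φ) ≤ C * subNorm e}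

/-- `φ : E → B(H₂)` is weighted completely bounded (λ-cb) for the weight `lam`. -/
def IsWeightedCB {E : Submodule ℂ (H₁ →L[ℂ] H₁)} (lam : Weight)
    (φ : ↥E → (H₂ →L[ℂ] H₂)) : Prop :=
  ∃ C : ℝ, 0 ≤ C ∧ ∀ (n : ℕ) (e : Matrix (Fin (n + 1)) (Fin (n + 1)) ↥E),
    opMatNorm (wAmp lam φ e) ≤ C * subNorm e

/-- The weighted cb norm `‖φ‖_cb^λ = sup_n ‖φ ⊗ λₙ‖`, as the least uniform bound. -/
def weightedCbNorm {E : Submodule ℂ (H₁ →L[ℂ] H₁)} (lam : Weight)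
    (φ : ↥E → (H₂ →L[ℂ] H₂)) : ℝ :=
  sInf {C : ℝ | 0 ≤ C ∧ ∀ (n : ℕ) (e : Matrix (Fin (n + 1)) (Fin (n + 1)) ↥E),
    opMatNorm (wAmp lam φ e) ≤ C * subNorm e}

/-- λ-cb for scalar valued maps `φ : E → ℂ`, where `φ ⊗ λₙ` is valued in `Mₙ(ℂ)`. -/
def IsWeightedCBFun {E : Submodule ℂ (H₁ →L[ℂ] H₁)} (lam : Weight) (φ : ↥E → ℂ) : Prop :=
  ∃ C : ℝ, 0 ≤ C ∧ ∀ (n : ℕ) (e : Matrix (Fin (n + 1)) (Fin (n + 1)) ↥E),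
    cMatNorm (wAmp lam φ e) ≤ C * subNorm e

/-- The weighted cb norm for scalar valued maps. -/
def weightedCbNormFun {E : Submodule ℂ (H₁ →L[ℂ] H₁)} (lam : Weight) (φ : ↥E → ℂ) : ℝ :=
  sInf {C : ℝ | 0 ≤ C ∧ ∀ (n : ℕ) (e : Matrix (Fin (n + 1)) (Fin (n + 1)) ↥E),
    cMatNorm (wAmp lam φ e) ≤ C * subNorm e}

/-- λ-cb for matrix valued maps `φ : E → M_κ(B(H₂))`, using the identification
`Mₙ(M_κ(B(H₂))) = M_{n × κ}(B(H₂))`. -/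
def IsWeightedCBMat {E : Submodule ℂ (H₁ →L[ℂ] H₁)} {κ : Type*} [Fintype κ] (lam : Weight)
    (φ : ↥E → Matrix κ κ (H₂ →L[ℂ] H₂)) : Prop :=
  ∃ C : ℝ, 0 ≤ C ∧ ∀ (n : ℕ) (e : Matrix (Fin (n + 1)) (Fin (n + 1)) ↥E),
    opMatNorm (flatten (wAmp lam φ e)) ≤ C * subNorm e

/-- The weighted cb norm for matrix valued maps. -/
def weightedCbNormMat {E : Submodule ℂ (H₁ →L[ℂ] H₁)} {κ : Type*} [Fintype κ] (lam : Weight)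
    (φ : ↥E → Matrix κ κ (H₂ →L[ℂ] H₂)) : ℝ :=
  sInf {C : ℝ | 0 ≤ C ∧ ∀ (n : ℕ) (e : Matrix (Fin (n + 1)) (Fin (n + 1)) ↥E),
    opMatNorm (flatten (wAmp lam φ e)) ≤ C * subNorm e}

end OperatorSpaces

/-- A bilinear weight: a uniformly bounded, not identically zero, sequence of bilinear maps
`λₙ : Mₙ(ℂ) × Mₙ(ℂ) → M_{k(n)}(ℂ)` (sizes `n + 1 ≥ 1`). -/
structure BilWeight where
  k : ℕ → ℕ
  map : ∀ n : ℕ, Matrix (Fin (n + 1)) (Fin (n + 1)) ℂ →ₗ[ℂ]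
    (Matrix (Fin (n + 1)) (Fin (n + 1)) ℂ →ₗ[ℂ] Matrix (Fin (k n)) (Fin (k n)) ℂ)
  bounded : ∃ C : ℝ, 0 ≤ C ∧ ∀ n a b, cMatNorm (map n a b) ≤ C * (cMatNorm a * cMatNorm b)
  nonzero : ∃ n, map n ≠ 0

/-- The bilinear amplification `φₙ` of a bilinear map `φ`: its `(p, q)` entry is
`∑ i j s t, (λₙ(ε i j, ε s t)) p q • φ (e i j) (f s t)`. -/
def bAmp {E F W : Type*} [AddCommMonoid W] [Module ℂ W] (lam : BilWeight)
    (φ : E → F → W) {n : ℕ} (e : Matrix (Fin (n + 1)) (Fin (n + 1)) E)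
    (f : Matrix (Fin (n + 1)) (Fin (n + 1)) F) :
    Matrix (Fin (lam.k n)) (Fin (lam.k n)) W :=
  Matrix.of fun p q => ∑ i, ∑ j, ∑ s, ∑ t,
    (lam.map n (Matrix.single i j 1) (Matrix.single s t 1)) p q •
      φ (e i j) (f s t)

section Bilinear

variable {H₁ H₂ H₃ : Type*}
  [NormedAddCommGroup H₁] [InnerProductSpace ℂ H₁]
  [NormedAddCommGroup H₂] [InnerProductSpace ℂ H₂]
  [NormedAddCommGroup H₃] [InnerProductSpace ℂ H₃]

/-- A bilinear map `φ : E × F → B(H₃)` is completely λ-bounded. -/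
def IsBilCB {E : Submodule ℂ (H₁ →L[ℂ] H₁)} {F : Submodule ℂ (H₂ →L[ℂ] H₂)}
    (lam : BilWeight) (φ : ↥E → ↥F → (H₃ →L[ℂ] H₃)) : Prop :=
  ∃ C : ℝ, 0 ≤ C ∧ ∀ (n : ℕ) (e : Matrix (Fin (n + 1)) (Fin (n + 1)) ↥E)
    (f : Matrix (Fin (n + 1)) (Fin (n + 1)) ↥F),
    opMatNorm (bAmp lam φ e f) ≤ C * (subNorm e * subNorm f)

/-- The completely λ-bounded norm `‖φ‖_λ = sup_n ‖φₙ‖` of a bilinear map. -/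
def bilCbNorm {E : Submodule ℂ (H₁ →L[ℂ] H₁)} {F : Submodule ℂ (H₂ →L[ℂ] H₂)}
    (lam : BilWeight) (φ : ↥E → ↥F → (H₃ →L[ℂ] H₃)) : ℝ :=
  sInf {C : ℝ | 0 ≤ C ∧ ∀ (n : ℕ) (e : Matrix (Fin (n + 1)) (Fin (n + 1)) ↥E)
    (f : Matrix (Fin (n + 1)) (Fin (n + 1)) ↥F),
    opMatNorm (bAmp lam φ e f) ≤ C * (subNorm e * subNorm f)}

/-- Completely λ-bounded, for matrix valued bilinear maps `φ : E × F → M_κ(B(H₃))`. -/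
def IsBilCBMat {E : Submodule ℂ (H₁ →L[ℂ] H₁)} {F : Submodule ℂ (H₂ →L[ℂ] H₂)}
    {κ : Type*} [Fintype κ] (lam : BilWeight)
    (φ : ↥E → ↥F → Matrix κ κ (H₃ →L[ℂ] H₃)) : Prop :=
  ∃ C : ℝ, 0 ≤ C ∧ ∀ (n : ℕ) (e : Matrix (Fin (n + 1)) (Fin (n + 1)) ↥E)
    (f : Matrix (Fin (n + 1)) (Fin (n + 1)) ↥F),
    opMatNorm (flatten (bAmp lam φ e f)) ≤ C * (subNorm e * subNorm f)

/-- The completely λ-bounded norm, for matrix valued bilinear maps. -/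
def bilCbNormMat {E : Submodule ℂ (H₁ →L[ℂ] H₁)} {F : Submodule ℂ (H₂ →L[ℂ] H₂)}
    {κ : Type*} [Fintype κ] (lam : BilWeight)
    (φ : ↥E → ↥F → Matrix κ κ (H₃ →L[ℂ] H₃)) : ℝ :=
  sInf {C : ℝ | 0 ≤ C ∧ ∀ (n : ℕ) (e : Matrix (Fin (n + 1)) (Fin (n + 1)) ↥E)
    (f : Matrix (Fin (n + 1)) (Fin (n + 1)) ↥F),
    opMatNorm (flatten (bAmp lam φ e f)) ≤ C * (subNorm e * subNorm f)}

end Bilinear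

end WeightedCB


namespace WeightedCB
section Aux
variable {H : Type*} [NormedAddCommGroup H] [InnerProductSpace ℂ H]
variable {ι κ : Type*} [Fintype ι] [Fintype κ]

lemma opMatApply_apply (e : Matrix ι ι (H →L[ℂ] H)) (v : PiLp 2 fun _ : ι => H) (i : ι) :
    opMatApply e v i = ∑ j, e i j (v j) := rfl

lemma sq_le_of_norms {a b : ℝ} (hb : 0 ≤ b) (h : a ^ 2 ≤ b ^ 2) (ha : 0 ≤ a) : a ≤ b := by
  nlinarith

lemma piLp_apply_le_norm (v : PiLp 2 fun _ : ι => H) (i : ι) : ‖v i‖ ≤ ‖v‖ := by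
  refine sq_le_of_norms (norm_nonneg _) ?_ (norm_nonneg _)
  rw [PiLp.norm_sq_eq_of_L2]
  exact Finset.single_le_sum (f := fun j => ‖v j‖ ^ 2) (fun j _ => sq_nonneg _) (Finset.mem_univ i)

/-- `opMatApply` as a continuous linear map. -/
def opMatCLM (e : Matrix ι ι (H →L[ℂ] H)) :
    (PiLp 2 fun _ : ι => H) →L[ℂ] (PiLp 2 fun _ : ι => H) :=
  LinearMap.mkContinuous
    { toFun := opMatApply e
      map_add' := by
        intro v w
        apply (WithLp.equiv 2 (∀ _ : ι, H)).injective
        funext i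
        simp [opMatApply_apply, PiLp.add_apply, Finset.sum_add_distrib]
      map_smul' := by
        intro c v
        apply (WithLp.equiv 2 (∀ _ : ι, H)).injective
        funext i
        simp [opMatApply_apply, PiLp.smul_apply, Finset.smul_sum] }
    ((1 + Fintype.card ι : ℝ) * ∑ i, ∑ j, ‖e i j‖)
    (by
      intro v
      have hnn : (0:ℝ) ≤ ∑ i, ∑ j, ‖e i j‖ :=
        Finset.sum_nonneg fun i _ => Finset.sum_nonneg fun j _ => norm_nonneg _
      refine sq_le_of_norms (by positivity) ?_ (norm_nonneg _)
      rw [PiLp.norm_sq_eq_of_L2]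
      have hrow : ∀ i : ι, ‖opMatApply e v i‖ ≤ (∑ j, ‖e i j‖) * ‖v‖ := by
        intro i
        rw [opMatApply_apply]
        calc ‖∑ j, e i j (v j)‖ ≤ ∑ j, ‖e i j (v j)‖ := norm_sum_le _ _
          _ ≤ ∑ j, ‖e i j‖ * ‖v‖ := by
              refine Finset.sum_le_sum fun j _ => ?_
              exact ((e i j).le_opNorm (v j)).trans
                (mul_le_mul_of_nonneg_left (piLp_apply_le_norm v j) (norm_nonneg _))
          _ = (∑ j, ‖e i j‖) * ‖v‖ := by rw [Finset.sum_mul]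
      calc ∑ i, ‖opMatApply e v i‖ ^ 2
          ≤ ∑ i, ((∑ j, ‖e i j‖) * ‖v‖) ^ 2 := by
            refine Finset.sum_le_sum fun i _ => ?_
            exact pow_le_pow_left₀ (norm_nonneg _) (hrow i) 2
        _ ≤ ∑ i : ι, ((∑ i, ∑ j, ‖e i j‖) * ‖v‖) ^ 2 := by
            refine Finset.sum_le_sum fun i _ => ?_
            have : (∑ j, ‖e i j‖) ≤ ∑ i, ∑ j, ‖e i j‖ :=
              Finset.single_le_sum (f := fun i => ∑ j, ‖e i j‖)
                (fun i _ => Finset.sum_nonneg fun j _ => norm_nonneg _) (Finset.mem_univ i)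
            refine pow_le_pow_left₀ (by positivity) ?_ 2
            exact mul_le_mul_of_nonneg_right this (norm_nonneg _)
        _ ≤ (Fintype.card ι : ℝ) * ((∑ i, ∑ j, ‖e i j‖) * ‖v‖) ^ 2 := by
            rw [Finset.sum_const, Finset.card_univ, nsmul_eq_mul]
        _ ≤ ((1 + Fintype.card ι : ℝ) * (∑ i, ∑ j, ‖e i j‖) * ‖v‖) ^ 2 := by
            have hc : (0:ℝ) ≤ (Fintype.card ι : ℝ) := Nat.cast_nonneg _
            have h1 : (Fintype.card ι : ℝ) ≤ (1 + Fintype.card ι : ℝ) ^ 2 := by nlinarith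
            have := mul_le_mul_of_nonneg_right h1 (sq_nonneg ((∑ i, ∑ j, ‖e i j‖) * ‖v‖))
            calc (Fintype.card ι : ℝ) * ((∑ i, ∑ j, ‖e i j‖) * ‖v‖) ^ 2
                ≤ (1 + Fintype.card ι : ℝ) ^ 2 * ((∑ i, ∑ j, ‖e i j‖) * ‖v‖) ^ 2 := this
              _ = ((1 + Fintype.card ι : ℝ) * (∑ i, ∑ j, ‖e i j‖) * ‖v‖) ^ 2 := by ring)

lemma opMatCLM_apply (e : Matrix ι ι (H →L[ℂ] H)) (v : PiLp 2 fun _ : ι => H) :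
    opMatCLM e v = opMatApply e v := rfl

lemma opMatNorm_eq (e : Matrix ι ι (H →L[ℂ] H)) : opMatNorm e = ‖opMatCLM e‖ := by
  rw [ContinuousLinearMap.norm_def, opMatNorm]
  rfl

lemma opMatNorm_nonneg (e : Matrix ι ι (H →L[ℂ] H)) : 0 ≤ opMatNorm e := by
  rw [opMatNorm_eq]; exact norm_nonneg (opMatCLM e)

lemma le_opMatNorm (e : Matrix ι ι (H →L[ℂ] H)) (v : PiLp 2 fun _ : ι => H) :
    ‖opMatApply e v‖ ≤ opMatNorm e * ‖v‖ := by
  rw [opMatNorm_eq, ← opMatCLM_apply]; exact (opMatCLM e).le_opNorm v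

lemma opMatNorm_le_bound (e : Matrix ι ι (H →L[ℂ] H)) {C : ℝ} (hC : 0 ≤ C)
    (h : ∀ v : PiLp 2 (fun _ : ι => H), ‖opMatApply e v‖ ≤ C * ‖v‖) : opMatNorm e ≤ C := by
  rw [opMatNorm_eq]
  exact ContinuousLinearMap.opNorm_le_bound _ hC (fun v => by rw [opMatCLM_apply]; exact h v)

lemma opMatApply_mul (M N : Matrix ι ι (H →L[ℂ] H)) (v : PiLp 2 fun _ : ι => H) :
    opMatApply (M * N) v = opMatApply M (opMatApply N v) := by
  apply (WithLp.equiv 2 (∀ _ : ι, H)).injective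
  funext i
  simp only [WithLp.equiv_apply, WithLp.equiv_symm_apply, PiLp.toLp_apply, opMatApply_apply,
    Matrix.mul_apply, ContinuousLinearMap.sum_apply, ContinuousLinearMap.mul_apply, map_sum]
  rw [Finset.sum_comm]

lemma opMatCLM_mul (M N : Matrix ι ι (H →L[ℂ] H)) :
    opMatCLM (M * N) = (opMatCLM M).comp (opMatCLM N) :=
  ContinuousLinearMap.ext fun v => opMatApply_mul M N v

lemma opMatNorm_mul_le (M N : Matrix ι ι (H →L[ℂ] H)) :
    opMatNorm (M * N) ≤ opMatNorm M * opMatNorm N := by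
  rw [opMatNorm_eq, opMatNorm_eq, opMatNorm_eq, opMatCLM_mul]
  exact ContinuousLinearMap.opNorm_comp_le _ _

/-- `cMatApply` as a continuous linear map. -/
def cMatCLM (a : Matrix ι κ ℂ) : EuclideanSpace ℂ κ →L[ℂ] EuclideanSpace ℂ ι :=
  LinearMap.toContinuousLinearMap
    { toFun := cMatApply a
      map_add' := by
        intro v w
        apply (WithLp.equiv 2 (ι → ℂ)).injective
        funext i
        simp [cMatApply, Matrix.mulVec, dotProduct, Finset.sum_add_distrib, mul_add]
      map_smul' := by
        intro c v
        apply (WithLp.equiv 2 (ι → ℂ)).injective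
        funext i
        simp only [cMatApply, WithLp.equiv_apply, WithLp.equiv_symm_apply, PiLp.toLp_apply,
          Matrix.mulVec, dotProduct, PiLp.smul_apply, smul_eq_mul, RingHom.id_apply, Finset.mul_sum]
        exact Finset.sum_congr rfl fun x _ => by ring }

lemma cMatCLM_apply (a : Matrix ι κ ℂ) (v : EuclideanSpace ℂ κ) :
    cMatCLM a v = cMatApply a v := rfl

lemma cMatNorm_eq (a : Matrix ι κ ℂ) : cMatNorm a = ‖cMatCLM a‖ := by
  rw [ContinuousLinearMap.norm_def, cMatNorm]
  rfl

lemma cMatNorm_nonneg (a : Matrix ι κ ℂ) : 0 ≤ cMatNorm a := by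
  rw [cMatNorm_eq]; exact norm_nonneg (cMatCLM a)

lemma le_cMatNorm (a : Matrix ι κ ℂ) (v : EuclideanSpace ℂ κ) :
    ‖cMatApply a v‖ ≤ cMatNorm a * ‖v‖ := by
  rw [cMatNorm_eq, ← cMatCLM_apply]; exact (cMatCLM a).le_opNorm v

lemma euclid_norm_sq {d : Type*} [Fintype d] (x : EuclideanSpace ℂ d) :
    ‖x‖ ^ 2 = ∑ m, ‖x m‖ ^ 2 := PiLp.norm_sq_eq_of_L2 _ x

/-- Key vector bound: a scalar matrix acting entrywise on vectors of a Hilbert space is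
bounded by its operator norm on `ℓ²`. -/
lemma key_vec (a : Matrix ι κ ℂ) (w : κ → H) :
    ∑ p, ‖∑ q, a p q • w q‖ ^ 2 ≤ cMatNorm a ^ 2 * ∑ q, ‖w q‖ ^ 2 := by
  classical
  set V := Submodule.span ℂ (Set.range w) with hV
  haveI : FiniteDimensional ℂ V := FiniteDimensional.span_of_finite ℂ (Set.finite_range w)
  set d := Module.finrank ℂ V with hd
  let b := stdOrthonormalBasis ℂ V
  let w' : κ → V := fun q => ⟨w q, Submodule.subset_span ⟨q, rfl⟩⟩
  let u : κ → EuclideanSpace ℂ (Fin d) := fun q => b.repr (w' q)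
  have hnormw : ∀ q, ‖w q‖ = ‖u q‖ := by
    intro q
    have : ‖w q‖ = ‖w' q‖ := rfl
    rw [this, ← b.repr.norm_map (w' q)]
  have hsum : ∀ p, ‖∑ q, a p q • w q‖ = ‖∑ q, a p q • u q‖ := by
    intro p
    have h1 : (∑ q, a p q • w q) = ((∑ q, a p q • w' q : V) : H) := by
      rw [Submodule.coe_sum]
      simp [w']
    have h2 : ‖((∑ q, a p q • w' q : V) : H)‖ = ‖(∑ q, a p q • w' q : V)‖ := rfl
    rw [h1, h2, ← b.repr.norm_map, map_sum]
    simp only [map_smul, u]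
  let c : Fin d → EuclideanSpace ℂ κ :=
    fun m => (WithLp.equiv 2 (κ → ℂ)).symm (fun q => u q m)
  have happ : ∀ (p : ι) (m : Fin d), (∑ q, a p q • u q) m = cMatApply a (c m) p := by
    intro p m
    have := map_sum (PiLp.proj 2 (𝕜 := ℂ) (fun _ : Fin d => ℂ) m)
      (fun q => a p q • u q) Finset.univ
    simp only [PiLp.proj_apply] at this
    rw [this]
    simp only [cMatApply, WithLp.equiv_apply, WithLp.equiv_symm_apply, PiLp.toLp_apply,
      Matrix.mulVec, dotProduct, PiLp.smul_apply, smul_eq_mul, c]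
  calc ∑ p, ‖∑ q, a p q • w q‖ ^ 2
      = ∑ p, ∑ m, ‖(∑ q, a p q • u q) m‖ ^ 2 := by
        simp only [hsum, euclid_norm_sq]
    _ = ∑ m, ∑ p, ‖cMatApply a (c m) p‖ ^ 2 := by
        rw [Finset.sum_comm]
        simp only [happ]
    _ = ∑ m, ‖cMatApply a (c m)‖ ^ 2 := by simp only [euclid_norm_sq]
    _ ≤ ∑ m, (cMatNorm a * ‖c m‖) ^ 2 := by
        refine Finset.sum_le_sum fun m _ => ?_
        exact pow_le_pow_left₀ (norm_nonneg _) (le_cMatNorm a (c m)) 2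
    _ = cMatNorm a ^ 2 * ∑ m, ‖c m‖ ^ 2 := by rw [Finset.mul_sum]; ring_nf
    _ = cMatNorm a ^ 2 * ∑ q, ‖w q‖ ^ 2 := by
        congr 1
        have : ∀ m, ‖c m‖ ^ 2 = ∑ q, ‖u q m‖ ^ 2 := by
          intro m; rw [euclid_norm_sq]; rfl
        simp only [this, hnormw, euclid_norm_sq]
        exact Finset.sum_comm

/-- The block diagonal matrix with equal diagonal blocks `γ`. -/
def blockDiag (ι : Type*) [Fintype ι] [DecidableEq ι] (γ : Matrix κ κ (H →L[ℂ] H)) :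
    Matrix (ι × κ) (ι × κ) (H →L[ℂ] H) :=
  Matrix.of fun p q => if p.1 = q.1 then γ p.2 q.2 else 0

variable [DecidableEq ι]

lemma opMatApply_blockDiag_scalar (a : Matrix κ κ ℂ)
    (v : PiLp 2 fun _ : ι × κ => H) (p : ι × κ) :
    opMatApply (blockDiag ι (a.map (algebraMap ℂ (H →L[ℂ] H)))) v p
      = ∑ q : κ, a p.2 q • v (p.1, q) := by
  rw [opMatApply_apply]
  rw [Fintype.sum_prod_type]
  have h1 : ∀ (j1 : ι) (j2 : κ),
      (blockDiag ι (a.map (algebraMap ℂ (H →L[ℂ] H)))) p (j1, j2) (v (j1, j2))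
        = if p.1 = j1 then a p.2 j2 • v (j1, j2) else 0 := by
    intro j1 j2
    simp only [blockDiag, Matrix.of_apply, Matrix.map_apply]
    split
    · rw [Algebra.algebraMap_eq_smul_one, ContinuousLinearMap.smul_apply,
        ContinuousLinearMap.one_apply]
    · rw [ContinuousLinearMap.zero_apply]
  simp only [h1]
  rw [Finset.sum_comm]
  simp [Finset.sum_ite_eq]

lemma opMatNorm_blockDiag_scalar_le (a : Matrix κ κ ℂ) :
    opMatNorm (blockDiag ι (a.map (algebraMap ℂ (H →L[ℂ] H)))) ≤ cMatNorm a := by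
  refine opMatNorm_le_bound _ (cMatNorm_nonneg a) fun v => ?_
  refine sq_le_of_norms (mul_nonneg (cMatNorm_nonneg a) (norm_nonneg v)) ?_ (norm_nonneg _)
  rw [mul_pow, PiLp.norm_sq_eq_of_L2, PiLp.norm_sq_eq_of_L2]
  calc ∑ p : ι × κ, ‖opMatApply (blockDiag ι (a.map (algebraMap ℂ (H →L[ℂ] H)))) v p‖ ^ 2
      = ∑ k : ι, ∑ p2 : κ, ‖∑ q : κ, a p2 q • v (k, q)‖ ^ 2 := by
        rw [Fintype.sum_prod_type]
        simp only [opMatApply_blockDiag_scalar]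
    _ ≤ ∑ k : ι, cMatNorm a ^ 2 * ∑ q : κ, ‖v (k, q)‖ ^ 2 := by
        refine Finset.sum_le_sum fun k _ => ?_
        exact key_vec a (fun q => v (k, q))
    _ = cMatNorm a ^ 2 * ∑ p : ι × κ, ‖v p‖ ^ 2 := by
        rw [← Finset.mul_sum, Fintype.sum_prod_type]


lemma flatten_conj [DecidableEq ι] (A : Matrix ι ι (Matrix κ κ (H →L[ℂ] H)))
    (γ δ : Matrix κ κ (H →L[ℂ] H)) :
    flatten (Matrix.of fun k l => γ * A k l * δ)
      = blockDiag ι γ * flatten A * blockDiag ι δ := by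
  ext ⟨k, p⟩ ⟨l, q⟩
  simp only [flatten, blockDiag, Matrix.of_apply, Matrix.mul_apply, Fintype.sum_prod_type,
    ite_mul, zero_mul, mul_ite, mul_zero, Finset.sum_ite_eq, Finset.sum_ite_eq',
    Finset.mem_univ, if_true, Finset.sum_ite_irrel, Finset.sum_const_zero]

lemma wAmp_conj {E : Type*} (lam : Weight) (φ : E → Matrix κ κ (H →L[ℂ] H))
    (γ δ : Matrix κ κ (H →L[ℂ] H)) {m : ℕ} (e : Matrix (Fin (m + 1)) (Fin (m + 1)) E) :
    wAmp lam (fun x => γ * φ x * δ) e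
      = Matrix.of fun k l => γ * (wAmp lam φ e k l) * δ := by
  ext k l
  simp only [wAmp, Matrix.of_apply, Matrix.mul_sum, Matrix.sum_mul,
    mul_smul_comm, smul_mul_assoc]

section Norms
variable {H₁ H₂ : Type*}
  [NormedAddCommGroup H₁] [InnerProductSpace ℂ H₁]
  [NormedAddCommGroup H₂] [InnerProductSpace ℂ H₂]

lemma subNorm_nonneg {E : Submodule ℂ (H₁ →L[ℂ] H₁)}
    (e : Matrix ι ι ↥E) : 0 ≤ subNorm e := opMatNorm_nonneg _

lemma weightedCbNormMat_spec {E : Submodule ℂ (H₁ →L[ℂ] H₁)} (lam : Weight)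
    (φ : ↥E → Matrix κ κ (H₂ →L[ℂ] H₂)) (hφ : IsWeightedCBMat lam φ) :
    0 ≤ weightedCbNormMat lam φ ∧
      ∀ (m : ℕ) (e : Matrix (Fin (m + 1)) (Fin (m + 1)) ↥E),
        opMatNorm (flatten (wAmp lam φ e)) ≤ weightedCbNormMat lam φ * subNorm e := by
  set S := {C : ℝ | 0 ≤ C ∧ ∀ (m : ℕ) (e : Matrix (Fin (m + 1)) (Fin (m + 1)) ↥E),
    opMatNorm (flatten (wAmp lam φ e)) ≤ C * subNorm e} with hS
  have hne : S.Nonempty := by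
    obtain ⟨C, hC0, hC⟩ := hφ
    exact ⟨C, hC0, hC⟩
  have hbdd : BddBelow S := ⟨0, fun C hC => hC.1⟩
  have h0 : 0 ≤ sInf S := le_csInf hne fun C hC => hC.1
  refine ⟨h0, fun m e => ?_⟩
  have hs : 0 ≤ subNorm e := subNorm_nonneg e
  rcases hs.eq_or_lt with hs0 | hs0
  · obtain ⟨C, hC0, hC⟩ := hφ
    have := hC m e
    rw [← hs0, mul_zero] at this ⊢
    exact this
  · rw [← div_le_iff₀ hs0] at *
    refine le_csInf hne fun C hC => ?_
    rw [div_le_iff₀ hs0]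
    exact hC.2 m e

lemma weightedCbNormMat_le {E : Submodule ℂ (H₁ →L[ℂ] H₁)} (lam : Weight)
    (φ : ↥E → Matrix κ κ (H₂ →L[ℂ] H₂)) {C : ℝ} (hC0 : 0 ≤ C)
    (h : ∀ (m : ℕ) (e : Matrix (Fin (m + 1)) (Fin (m + 1)) ↥E),
      opMatNorm (flatten (wAmp lam φ e)) ≤ C * subNorm e) :
    weightedCbNormMat lam φ ≤ C :=
  csInf_le ⟨0, fun D hD => hD.1⟩ ⟨hC0, h⟩

end Norms
end Aux
end WeightedCB

/-- **Ruan axiom R2 for λ-cb maps.** If `φ : E → Mₙ(F)` is λ-cb and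
`α, β ∈ Mₙ(ℂ)`, then `αφβ : e ↦ α · φ(e) · β` is λ-cb with
`‖αφβ‖_cb^λ ≤ ‖α‖ · ‖φ‖_cb^λ · ‖β‖`. -/
theorem weightedCB_scalar_mul {H₁ H₂ : Type*}
    [NormedAddCommGroup H₁] [InnerProductSpace ℂ H₁] [CompleteSpace H₁]
    [NormedAddCommGroup H₂] [InnerProductSpace ℂ H₂] [CompleteSpace H₂]
    (E : Submodule ℂ (H₁ →L[ℂ] H₁)) (hE : IsClosed (E : Set (H₁ →L[ℂ] H₁)))
    (F : Submodule ℂ (H₂ →L[ℂ] H₂)) (hF : IsClosed (F : Set (H₂ →L[ℂ] H₂)))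
    (lam : WeightedCB.Weight) (n : ℕ)
    (φ : ↥E →ₗ[ℂ] Matrix (Fin (n + 1)) (Fin (n + 1)) (H₂ →L[ℂ] H₂))
    (hφF : ∀ x i j, φ x i j ∈ F)
    (hφ : WeightedCB.IsWeightedCBMat lam (⇑φ))
    (α β : Matrix (Fin (n + 1)) (Fin (n + 1)) ℂ) :
    WeightedCB.IsWeightedCBMat lam
      (fun x => α.map (algebraMap ℂ (H₂ →L[ℂ] H₂)) * φ x *
        β.map (algebraMap ℂ (H₂ →L[ℂ] H₂))) ∧
      WeightedCB.weightedCbNormMat lam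
        (fun x => α.map (algebraMap ℂ (H₂ →L[ℂ] H₂)) * φ x *
          β.map (algebraMap ℂ (H₂ →L[ℂ] H₂))) ≤
        WeightedCB.cMatNorm α * WeightedCB.weightedCbNormMat lam (⇑φ) *
          WeightedCB.cMatNorm β := by
  classical
  set γ := α.map (algebraMap ℂ (H₂ →L[ℂ] H₂)) with hγ
  set δ := β.map (algebraMap ℂ (H₂ →L[ℂ] H₂)) with hδ
  obtain ⟨hW0, hW⟩ := WeightedCB.weightedCbNormMat_spec lam (⇑φ) hφ
  set K := WeightedCB.cMatNorm α * WeightedCB.weightedCbNormMat lam (⇑φ) *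
    WeightedCB.cMatNorm β with hK
  have hK0 : 0 ≤ K :=
    mul_nonneg (mul_nonneg (WeightedCB.cMatNorm_nonneg α) hW0) (WeightedCB.cMatNorm_nonneg β)
  have hbound : ∀ (m : ℕ) (e : Matrix (Fin (m + 1)) (Fin (m + 1)) ↥E),
      WeightedCB.opMatNorm (WeightedCB.flatten
        (WeightedCB.wAmp lam (fun x => γ * φ x * δ) e)) ≤ K * WeightedCB.subNorm e := by
    intro m e
    rw [WeightedCB.wAmp_conj, WeightedCB.flatten_conj]
    have h1 := WeightedCB.opMatNorm_mul_le
      (WeightedCB.blockDiag (Fin (m + 1)) γ * WeightedCB.flatten (WeightedCB.wAmp lam (⇑φ) e))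
      (WeightedCB.blockDiag (Fin (m + 1)) δ)
    have h2 := WeightedCB.opMatNorm_mul_le (WeightedCB.blockDiag (Fin (m + 1)) γ)
      (WeightedCB.flatten (WeightedCB.wAmp lam (⇑φ) e))
    have hα := WeightedCB.opMatNorm_blockDiag_scalar_le (ι := Fin (m + 1)) (H := H₂) α
    have hβ := WeightedCB.opMatNorm_blockDiag_scalar_le (ι := Fin (m + 1)) (H := H₂) β
    have hX := hW m e
    have hXnn := WeightedCB.opMatNorm_nonneg (WeightedCB.flatten (WeightedCB.wAmp lam (⇑φ) e))
    have hαnn := WeightedCB.opMatNorm_nonneg (WeightedCB.blockDiag (Fin (m + 1)) γ)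
    have hβnn := WeightedCB.opMatNorm_nonneg (WeightedCB.blockDiag (Fin (m + 1)) δ)
    have hsnn := WeightedCB.subNorm_nonneg e
    calc WeightedCB.opMatNorm (WeightedCB.blockDiag (Fin (m + 1)) γ *
            WeightedCB.flatten (WeightedCB.wAmp lam (⇑φ) e) *
            WeightedCB.blockDiag (Fin (m + 1)) δ)
        ≤ WeightedCB.opMatNorm (WeightedCB.blockDiag (Fin (m + 1)) γ *
            WeightedCB.flatten (WeightedCB.wAmp lam (⇑φ) e)) *
            WeightedCB.opMatNorm (WeightedCB.blockDiag (Fin (m + 1)) δ) := h1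
      _ ≤ (WeightedCB.opMatNorm (WeightedCB.blockDiag (Fin (m + 1)) γ) *
            WeightedCB.opMatNorm (WeightedCB.flatten (WeightedCB.wAmp lam (⇑φ) e))) *
            WeightedCB.opMatNorm (WeightedCB.blockDiag (Fin (m + 1)) δ) := by
          exact mul_le_mul_of_nonneg_right h2 hβnn
      _ ≤ (WeightedCB.cMatNorm α *
            (WeightedCB.weightedCbNormMat lam (⇑φ) * WeightedCB.subNorm e)) *
            WeightedCB.cMatNorm β := by
          refine mul_le_mul ?_ hβ hβnn (mul_nonneg (WeightedCB.cMatNorm_nonneg α) (mul_nonneg hW0 hsnn))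
          exact mul_le_mul hα hX hXnn (WeightedCB.cMatNorm_nonneg α)
      _ = K * WeightedCB.subNorm e := by rw [hK]; ring
  exact ⟨⟨K, hK0, hbound⟩, WeightedCB.weightedCbNormMat_le lam _ hK0 hbound⟩
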